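/- Let n ≥ 2 and let f : ℝⁿ → ℝ be continuous and Lebesgue integrable with α := ∫_{ℝⁿ} max(f,0) dx < c_n and β := ∫_{ℝⁿ} max(−f,0) dx < ∞, such that y ↦ log(|y|/|x−y|) f(y) is Lebesgue integrable for every x ∈ ℝⁿ. Set u(x) := (1/c_n) ∫_{ℝⁿ} log(|y|/|x−y|) f(y) dy. Then there exist p > 1 and a constant K, both depending only on n, α and β, such that e^{n u} is an A_p weight with constant K: for every ball B ⊆ ℝⁿ, ((1/|B|) ∫_B e^{n u(x)} dx) · ((1/|B|) ∫_B e^{−n u(x)/(p−1)} dx)^{p−1} ≤ K. -/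

import Mathlib

open MeasureTheory Metric Set
open scoped ENNReal

/-- `c_n := 2^{n-2} Γ(n/2) π^{n/2}`. -/
noncomputable def cN (n : ℕ) : ℝ :=
  (2 : ℝ) ^ ((n : ℝ) - 2) * Real.Gamma ((n : ℝ) / 2) * Real.pi ^ ((n : ℝ) / 2)

/-- Logarithmic potential `u(x) = (1/c_n) ∫ log(|y|/|x-y|) f(y) dy`. -/
noncomputable def logPot (n : ℕ) (f : EuclideanSpace ℝ (Fin n) → ℝ)
    (x : EuclideanSpace ℝ (Fin n)) : ℝ :=
  (1 / cN n) * ∫ y, Real.log (‖y‖ / ‖x - y‖) * f y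

/-- `ω` is an `A_p` weight with constant `K` (for `p > 1`):
for every ball `B`, `(⨍_B ω) · (⨍_B ω^{-1/(p-1)})^{p-1} ≤ K`. -/
def IsApWeight (n : ℕ) (p K : ℝ) (ω : EuclideanSpace ℝ (Fin n) → ℝ) : Prop :=
  ∀ (x : EuclideanSpace ℝ (Fin n)) (r : ℝ), 0 < r →
    ((volume (ball x r)).toReal⁻¹ * ∫ y in ball x r, ω y) *
      ((volume (ball x r)).toReal⁻¹ *
        ∫ y in ball x r, (ω y) ^ (-(1 / (p - 1)) : ℝ)) ^ (p - 1) ≤ K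

/-- `δ_ω(x,y) = (∫_{B_{xy}} ω)^{1/n}`, where `B_{xy}` is the closed ball with
center `(x+y)/2` and radius `|x-y|/2`. -/
noncomputable def deltaW (n : ℕ) (ω : EuclideanSpace ℝ (Fin n) → ℝ)
    (x y : EuclideanSpace ℝ (Fin n)) : ℝ :=
  (∫ z in closedBall (midpoint ℝ x y) (dist x y / 2), ω z) ^ ((1 : ℝ) / n)

/-- `d_ω(x,y)`: infimum of `∫₀^L ω(γ(t))^{1/n} dt` over all `L ≥ 0` and all
1-Lipschitz curves `γ : [0,L] → ℝⁿ` joining `x` to `y` inside `B_{xy}`. -/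
noncomputable def dW (n : ℕ) (ω : EuclideanSpace ℝ (Fin n) → ℝ)
    (x y : EuclideanSpace ℝ (Fin n)) : ℝ :=
  sInf {d : ℝ | ∃ (L : ℝ) (γ : ℝ → EuclideanSpace ℝ (Fin n)),
    0 ≤ L ∧ LipschitzOnWith 1 γ (Set.Icc 0 L) ∧ γ 0 = x ∧ γ L = y ∧
    (∀ t ∈ Set.Icc 0 L, γ t ∈ closedBall (midpoint ℝ x y) (dist x y / 2)) ∧
    d = ∫ t in (0 : ℝ)..L, (ω (γ t)) ^ ((1 : ℝ) / n)}

/-- One-dimensional Hausdorff content: infimum of `Σᵢ diam Bᵢ` over countable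
covers of `E` by balls `Bᵢ`. -/
noncomputable def H1content {n : ℕ} (E : Set (EuclideanSpace ℝ (Fin n))) : ℝ≥0∞ :=
  ⨅ (c : ℕ → EuclideanSpace ℝ (Fin n) × ℝ) (_ : E ⊆ ⋃ i, ball (c i).1 (c i).2),
    ∑' i, ENNReal.ofReal (2 * (c i).2)

/-!
Fix a ball `B = B(x₀, r)` and `x ∈ B`. In `u(x) - u(x₀)` the part of the integral outside
`B(x₀, 2r)` is at most `(n / c_n) log 2 ‖f‖₁`, since there `|x₀ - y| / |x - y| ∈ [1/2, 2]`.
Inside, the kernel `log (3r / |x - y|)` is nonnegative, so `f` may be replaced by `f⁺`; for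
`∫ f⁺ ≤ A < c_n` Jensen's inequality with the weight `f⁺ / A` bounds the exponential of this part
by `2 + A⁻¹ ∫ (3r / |x - y|) ^ (n A / c_n) f⁺(y) dy`. The exponent `n A / c_n` is below `n`, so
by Tonelli and scaling its mean over `B` is bounded independently of the ball. Hence
`⨍_B e^{n u} ≤ K e^T` with `T` linear in `f`. The same bound for `-f / D`, `D = 1 + β⁺ / c_n`,
whose positive part has mass `β / D < c_n`, reads `⨍_B e^{-n u / D} ≤ K' e^{-T / D}`, and the
`A_p` quantity with `p = 1 + D` is at most `K K'^D`.
-/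

open Real

lemma log_div_sub_log_div {a b c : ℝ} (ha : a ≠ 0) (hb : b ≠ 0) (hc : c ≠ 0) :
    log (a / b) - log (a / c) = log (c / b) := by
  rw [log_div ha hb, log_div ha hc, log_div hc hb]
  ring

lemma abs_log_div_le {R t : ℝ} (hR : 0 < R) (ht : 0 ≤ t) :
    |log (R / t)| ≤ 2 * (R / t) ^ (1 / 2 : ℝ) + t / R := by
  rcases ht.eq_or_lt with rfl | ht
  · simp
  have hRt : 0 < R / t := div_pos hR ht
  have hsqrt := log_le_rpow_div hRt.le (by norm_num : (0 : ℝ) < 1 / 2)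
  have hlin := log_le_sub_one_of_pos (div_pos ht hR)
  rw [log_div ht.ne' hR.ne'] at hlin
  rw [log_div hR.ne' ht.ne'] at hsqrt ⊢
  rw [abs_le]
  constructor <;> nlinarith [div_pos ht hR, rpow_nonneg hRt.le (1 / 2 : ℝ)]

lemma div_rpow_eq_mul_rpow_neg {R t : ℝ} (hR : 0 ≤ R) (ht : 0 ≤ t) (s : ℝ) :
    (R / t) ^ s = R ^ s * t ^ (-s) := by
  rw [div_rpow hR ht, rpow_neg ht, div_eq_mul_inv]

lemma log_div_nonneg {R t : ℝ} (ht : 0 ≤ t) (htR : t ≤ R) : 0 ≤ log (R / t) := by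
  rcases ht.eq_or_lt with rfl | ht
  · simp
  exact log_nonneg ((one_le_div ht).2 htR)

lemma exp_mul_log_le_one_add_rpow {t : ℝ} (ht : 0 ≤ t) (s : ℝ) : exp (s * log t) ≤ 1 + t ^ s := by
  rcases ht.eq_or_lt with rfl | ht
  · simp [rpow_nonneg le_rfl s]
  rw [mul_comm, ← rpow_def_of_pos ht]
  linarith

lemma abs_log_norm_sub_div_le_log_two {E : Type*} [SeminormedAddCommGroup E] {x x₀ y : E} {r : ℝ}
    (hx : ‖x - x₀‖ < r) (hy : 2 * r ≤ ‖y - x₀‖) : |log (‖x₀ - y‖ / ‖x - y‖)| ≤ log 2 := by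
  have h₁ : ‖x₀ - y‖ = ‖y - x₀‖ := norm_sub_rev _ _
  have h₂ : ‖y - x₀‖ ≤ ‖x - y‖ + ‖x - x₀‖ := by
    simpa [norm_sub_rev y x] using norm_sub_le_norm_sub_add_norm_sub y x x₀
  have h₃ : ‖x - y‖ ≤ ‖x - x₀‖ + ‖y - x₀‖ := by
    simpa [norm_sub_rev x₀ y] using norm_sub_le_norm_sub_add_norm_sub x x₀ y
  have hpos : 0 < ‖x - y‖ := by linarith [norm_nonneg (x - x₀)]
  rw [abs_le, h₁, ← log_inv]
  constructor
  · exact log_le_log (by norm_num) ((le_div_iff₀ hpos).2 (by linarith))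
  · exact log_le_log (div_pos (by linarith) hpos) ((div_le_iff₀ hpos).2 (by linarith))

lemma mul_rpow_le_of_le_mul_exp {a b K₁ K₂ T D : ℝ} (ha : 0 ≤ a) (hb : 0 ≤ b) (hD : 0 < D)
    (h₁ : a ≤ K₁ * exp T) (h₂ : b ≤ K₂ * exp (-D⁻¹ * T)) : a * b ^ D ≤ K₁ * K₂ ^ D := by
  have hK₂ : 0 ≤ K₂ := nonneg_of_mul_nonneg_left (hb.trans h₂) (exp_pos _)
  calc a * b ^ D ≤ K₁ * exp T * (K₂ * exp (-D⁻¹ * T)) ^ D :=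
        mul_le_mul h₁ (rpow_le_rpow hb h₂ hD.le) (rpow_nonneg hb _) (ha.trans h₁)
    _ = K₁ * K₂ ^ D := by
        rw [mul_rpow hK₂ (exp_pos _).le, ← exp_mul, mul_mul_mul_comm, ← exp_add,
          show T + -D⁻¹ * T * D = 0 by field_simp; ring, exp_zero, mul_one]

section Integral

variable {α : Type*} [MeasurableSpace α] {μ : Measure α}

/-- Jensen's inequality for the sub-probability density `g / A`, the missing mass being put at
`h = 0`; it comes from the tangent line of `exp` at `A⁻¹ ∫ h g`. -/
lemma exp_inv_mul_integral_mul_le {A : ℝ} (hA : 0 < A) {g h : α → ℝ} (hg : 0 ≤ᵐ[μ] g)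
    (hgA : ∫ x, g x ∂μ ≤ A) (hgi : Integrable g μ) (hgh : Integrable (fun x => h x * g x) μ)
    (hge : Integrable (fun x => exp (h x) * g x) μ) :
    exp (A⁻¹ * ∫ x, h x * g x ∂μ) ≤ 1 + A⁻¹ * ∫ x, exp (h x) * g x ∂μ := by
  set a := A⁻¹ * ∫ x, h x * g x ∂μ
  set G := ∫ x, g x ∂μ
  have hG : 0 ≤ G := integral_nonneg_of_ae hg
  have hgh' : Integrable (fun x => g x + h x * g x) μ := hgi.add hgh
  have hlin : Integrable (fun x => exp a * (g x + h x * g x - a * g x)) μ :=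
    (hgh'.sub (hgi.const_mul a)).const_mul _
  have htangent : exp a * (G + A * a - a * G) ≤ ∫ x, exp (h x) * g x ∂μ := by
    calc exp a * (G + A * a - a * G) = ∫ x, exp a * (g x + h x * g x - a * g x) ∂μ := by
          rw [integral_const_mul, integral_sub hgh' (hgi.const_mul a), integral_add hgi hgh,
            integral_const_mul, mul_inv_cancel_left₀ hA.ne']
      _ ≤ ∫ x, exp (h x) * g x ∂μ := by
          refine integral_mono_ae hlin hge ?_
          filter_upwards [hg] with x hx
          have htan : exp a * (1 + (h x - a)) ≤ exp (h x) :=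
            calc exp a * (1 + (h x - a)) ≤ exp a * exp (h x - a) :=
                  mul_le_mul_of_nonneg_left (by linarith [add_one_le_exp (h x - a)]) (exp_pos a).le
              _ = exp (h x) := by rw [← exp_add, add_sub_cancel]
          calc exp a * (g x + h x * g x - a * g x) = exp a * (1 + (h x - a)) * g x := by ring
            _ ≤ exp (h x) * g x := mul_le_mul_of_nonneg_right htan hx
  have hexp : exp a * (1 - a) ≤ 1 :=
    calc exp a * (1 - a) ≤ exp a * exp (-a) :=
          mul_le_mul_of_nonneg_left (by linarith [add_one_le_exp (-a)]) (exp_pos a).le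
      _ = 1 := by rw [← exp_add, add_neg_cancel, exp_zero]
  rw [← mul_le_mul_iff_of_pos_left hA, mul_add, mul_one, mul_inv_cancel_left₀ hA.ne']
  nlinarith [mul_le_mul_of_nonneg_right hexp (sub_nonneg.2 hgA)]

lemma integral_max_const_mul_zero {c : ℝ} (hc : 0 ≤ c) (h : α → ℝ) :
    ∫ y, max (c * h y) 0 ∂μ = c * ∫ y, max (h y) 0 ∂μ := by
  simp_rw [← integral_const_mul, mul_max_of_nonneg _ _ hc, mul_zero]

end Integral

section Tonelli

variable {α β : Type*} [MeasurableSpace α] [MeasurableSpace β] {μ : Measure α} {ν : Measure β}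
  [SFinite μ] [SFinite ν]

lemma integrable_integral_mul_and_integral_integral_mul_le {k : α → β → ℝ} {g : β → ℝ}
    (hk : Measurable (Function.uncurry k)) (hk₀ : ∀ x y, 0 ≤ k x y) (hgm : Measurable g)
    (hg : Integrable g ν) (hg₀ : ∀ y, 0 ≤ g y) {C : ℝ} (hC₀ : 0 ≤ C)
    (hC : ∀ᵐ y ∂ν, ∫⁻ x, ENNReal.ofReal (k x y) ∂μ ≤ ENNReal.ofReal C) :
    Integrable (fun x => ∫ y, k x y * g y ∂ν) μ ∧
      ∫ x, ∫ y, k x y * g y ∂ν ∂μ ≤ C * ∫ y, g y ∂ν := by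
  have hF : Measurable fun p : α × β => k p.1 p.2 * g p.2 := hk.mul (hgm.comp measurable_snd)
  have hF₀ : ∀ x y, 0 ≤ k x y * g y := fun x y => mul_nonneg (hk₀ x y) (hg₀ y)
  have hΦ₀ : ∀ x, 0 ≤ ∫ y, k x y * g y ∂ν := fun x => integral_nonneg (hF₀ x)
  have hΦm : StronglyMeasurable fun x => ∫ y, k x y * g y ∂ν :=
    hF.stronglyMeasurable.integral_prod_right'
  have hofReal : ∀ x, ENNReal.ofReal (∫ y, k x y * g y ∂ν) ≤
      ∫⁻ y, ENNReal.ofReal (k x y * g y) ∂ν := by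
    intro x
    by_cases hi : Integrable (fun y => k x y * g y) ν
    · rw [ofReal_integral_eq_lintegral_ofReal hi (ae_of_all _ (hF₀ x))]
    · simp [integral_undef hi]
  have hbound : ∫⁻ x, ENNReal.ofReal (∫ y, k x y * g y ∂ν) ∂μ ≤
      ENNReal.ofReal (C * ∫ y, g y ∂ν) :=
    calc _ ≤ ∫⁻ x, ∫⁻ y, ENNReal.ofReal (k x y * g y) ∂ν ∂μ := lintegral_mono hofReal
      _ = ∫⁻ y, (∫⁻ x, ENNReal.ofReal (k x y) ∂μ) * ENNReal.ofReal (g y) ∂ν := by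
          rw [lintegral_lintegral_swap hF.ennreal_ofReal.aemeasurable]
          simp_rw [ENNReal.ofReal_mul (hk₀ _ _)]
          exact lintegral_congr fun y => lintegral_mul_const' _ _ ENNReal.ofReal_ne_top
      _ ≤ ∫⁻ y, ENNReal.ofReal C * ENNReal.ofReal (g y) ∂ν :=
          lintegral_mono_ae (hC.mono fun y hy => mul_le_mul_left hy _)
      _ = ENNReal.ofReal (C * ∫ y, g y ∂ν) := by
          rw [lintegral_const_mul _ hgm.ennreal_ofReal, ENNReal.ofReal_mul hC₀,
            ofReal_integral_eq_lintegral_ofReal hg (ae_of_all _ hg₀)]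
  refine ⟨⟨hΦm.aestronglyMeasurable, (hasFiniteIntegral_iff_ofReal (ae_of_all _ hΦ₀)).2
    (hbound.trans_lt ENNReal.ofReal_lt_top)⟩, ?_⟩
  rw [integral_eq_lintegral_of_nonneg_ae (ae_of_all _ hΦ₀) hΦm.aestronglyMeasurable]
  exact ENNReal.toReal_le_of_le_ofReal (mul_nonneg hC₀ (integral_nonneg hg₀)) hbound

end Tonelli

lemma LocallyIntegrable.comp_sub_right {G F : Type*} [NormedAddCommGroup G] [MeasurableSpace G]
    [BorelSpace G] [NormedAddCommGroup F] {μ : Measure G} [μ.IsAddRightInvariant] {f : G → F}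
    (hf : LocallyIntegrable f μ) (x : G) : LocallyIntegrable (fun y => f (y - x)) μ := by
  rw [← (measurePreserving_sub_right μ x).map_eq] at hf
  exact (locallyIntegrable_map_homeomorph (Homeomorph.subRight x)).1 hf

lemma LocallyIntegrable.integrableOn_ball_mul {X : Type*} [MetricSpace X] [ProperSpace X]
    [MeasurableSpace X] [OpensMeasurableSpace X] {μ : Measure X} {k g : X → ℝ}
    (hk : LocallyIntegrable k μ) (hg : Continuous g) (c : X) (ρ : ℝ) :
    IntegrableOn (fun y => k y * g y) (ball c ρ) μ :=
  ((hk.integrableOn_isCompact (isCompact_closedBall c ρ)).mul_continuousOn hg.continuousOn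
    (isCompact_closedBall c ρ)).mono_set ball_subset_closedBall

section Kernel

variable {E : Type*} [NormedAddCommGroup E] [NormedSpace ℝ E] [FiniteDimensional ℝ E]
  [MeasurableSpace E] [BorelSpace E] {μ : Measure E} [μ.IsAddHaarMeasure]

lemma setIntegral_ball_div_norm_sub_rpow (x : E) {ρ : ℝ} (hρ : 0 < ρ) (s : ℝ) :
    ∫ y in ball x ρ, (ρ / ‖y - x‖) ^ s ∂μ =
      (⨍ z in ball (0 : E) 1, ‖z‖ ^ (-s) ∂μ) * μ.real (ball x ρ) := by
  have htrans : ∫ y in ball x ρ, (ρ / ‖y - x‖) ^ s ∂μ = ∫ z in ball 0 ρ, (ρ / ‖z‖) ^ s ∂μ := by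
    have hpre : (fun y => y - x) ⁻¹' ball (0 : E) ρ = ball x ρ := by
      ext y
      simp [dist_eq_norm]
    rw [← hpre]
    exact (measurePreserving_sub_right μ x).setIntegral_preimage_emb
      (measurableEmbedding_subRight x) (fun z : E => (ρ / ‖z‖) ^ s) (ball 0 ρ)
  have hscale : ∫ z in ball 0 ρ, (ρ / ‖z‖) ^ s ∂μ =
      ρ ^ Module.finrank ℝ E * ∫ z in ball (0 : E) 1, ‖z‖ ^ (-s) ∂μ := by
    have hsmul : ∀ z : E, (ρ / ‖ρ • z‖) ^ s = ‖z‖ ^ (-s) := fun z => by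
      rw [norm_smul, Real.norm_of_nonneg hρ.le, div_mul_cancel_left₀ hρ.ne',
        inv_rpow (norm_nonneg z), rpow_neg (norm_nonneg z)]
    have key := Measure.setIntegral_comp_smul_of_pos μ (fun z => (ρ / ‖z‖) ^ s) (ball (0 : E) 1) hρ
    simp only [hsmul, smul_unitBall_of_pos hρ, smul_eq_mul] at key
    rw [key, mul_inv_cancel_left₀ (by positivity)]
  have hball : μ.real (ball (0 : E) 1) ≠ 0 :=
    (ENNReal.toReal_pos (measure_ball_pos μ 0 one_pos).ne' measure_ball_lt_top.ne).ne'
  rw [htrans, hscale, setAverage_eq, smul_eq_mul, measureReal_def μ (ball x ρ),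
    Measure.addHaar_ball_of_pos μ x hρ, ENNReal.toReal_mul, ENNReal.toReal_ofReal (by positivity),
    ← measureReal_def]
  field_simp

variable [Nontrivial E]

lemma locallyIntegrable_div_norm_rpow {R s : ℝ} (hR : 0 ≤ R) (hs : s < Module.finrank ℝ E) :
    LocallyIntegrable (fun z : E => (R / ‖z‖) ^ s) μ := by
  refine locallyIntegrable_of_norm_le_rpow Module.finrank_pos hs (C := R ^ s)
    (ae_of_all _ fun z => ?_)
    ((measurable_const.div measurable_norm).pow_const s).aestronglyMeasurable
  rw [div_rpow_eq_mul_rpow_neg hR (norm_nonneg z), Real.norm_of_nonneg (by positivity)]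

lemma locallyIntegrable_log_div_norm {R : ℝ} (hR : 0 < R) :
    LocallyIntegrable (fun z : E => log (R / ‖z‖)) μ := by
  have hd : (1 / 2 : ℝ) < Module.finrank ℝ E := by
    have : (1 : ℝ) ≤ Module.finrank ℝ E := Nat.one_le_cast.2 Module.finrank_pos
    linarith
  have hdom : LocallyIntegrable (fun z : E => 2 * (R / ‖z‖) ^ (1 / 2 : ℝ) + ‖z‖ / R) μ :=
    ((locallyIntegrable_div_norm_rpow hR.le hd).smul (2 : ℝ)).add
      (continuous_norm.div_const R).locallyIntegrable
  refine hdom.mono (measurable_const.div measurable_norm).log.aestronglyMeasurable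
    (ae_of_all _ fun z => ?_)
  rw [Real.norm_eq_abs, Real.norm_of_nonneg (by positivity)]
  exact abs_log_div_le hR (norm_nonneg z)

lemma locallyIntegrable_div_norm_sub_rpow {R s : ℝ} (hR : 0 ≤ R) (hs : s < Module.finrank ℝ E)
    (x : E) : LocallyIntegrable (fun y => (R / ‖x - y‖) ^ s) μ := by
  simpa only [norm_sub_rev x] using
    LocallyIntegrable.comp_sub_right (locallyIntegrable_div_norm_rpow (μ := μ) hR hs) x

lemma locallyIntegrable_log_div_norm_sub {R : ℝ} (hR : 0 < R) (x : E) :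
    LocallyIntegrable (fun y => log (R / ‖x - y‖)) μ := by
  simpa only [norm_sub_rev x] using
    LocallyIntegrable.comp_sub_right (locallyIntegrable_log_div_norm (μ := μ) hR) x

lemma lintegral_ball_div_norm_sub_rpow_le {s : ℝ} (hs : s < Module.finrank ℝ E) {x₀ y : E}
    {r : ℝ} (hy : y ∈ ball x₀ (2 * r)) :
    ∫⁻ x in ball x₀ r, ENNReal.ofReal ((3 * r / ‖x - y‖) ^ s) ∂μ ≤
      ENNReal.ofReal (3 ^ Module.finrank ℝ E * (⨍ z in ball (0 : E) 1, ‖z‖ ^ (-s) ∂μ) *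
        μ.real (ball x₀ r)) := by
  have hr : 0 < r := by linarith [pos_of_mem_ball hy]
  have hsub : ball x₀ r ⊆ ball y (3 * r) := fun x hx => by
    rw [mem_ball] at hx hy ⊢
    linarith [dist_triangle_right x y x₀]
  have hint : IntegrableOn (fun x => (3 * r / ‖x - y‖) ^ s) (ball y (3 * r)) μ :=
    ((LocallyIntegrable.comp_sub_right (locallyIntegrable_div_norm_rpow (μ := μ) (R := 3 * r)
      (by positivity) hs) y).integrableOn_isCompact (isCompact_closedBall y (3 * r))).mono_set
      ball_subset_closedBall
  have hvol : μ.real (ball y (3 * r)) = 3 ^ Module.finrank ℝ E * μ.real (ball x₀ r) := by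
    rw [measureReal_def, measureReal_def, Measure.addHaar_ball_mul_of_pos μ y three_pos,
      Measure.addHaar_ball_center μ x₀, ENNReal.toReal_mul, ENNReal.toReal_ofReal (by positivity)]
  calc ∫⁻ x in ball x₀ r, ENNReal.ofReal ((3 * r / ‖x - y‖) ^ s) ∂μ
      ≤ ∫⁻ x in ball y (3 * r), ENNReal.ofReal ((3 * r / ‖x - y‖) ^ s) ∂μ :=
        lintegral_mono_set hsub
    _ = ENNReal.ofReal (∫ x in ball y (3 * r), (3 * r / ‖x - y‖) ^ s ∂μ) :=
        (ofReal_integral_eq_lintegral_ofReal hint (ae_of_all _ fun x => by positivity)).symm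
    _ = _ := by
        rw [setIntegral_ball_div_norm_sub_rpow y (by positivity), hvol]
        ring_nf

lemma integrableOn_and_integral_ball_div_norm_sub_rpow_mul_le {s : ℝ}
    (hs : s < Module.finrank ℝ E) {g : E → ℝ} (hg : Continuous g) (hg₀ : ∀ y, 0 ≤ g y) (x₀ : E)
    {r : ℝ} (hr : 0 < r) :
    IntegrableOn (fun x => ∫ y in ball x₀ (2 * r), (3 * r / ‖x - y‖) ^ s * g y ∂μ) (ball x₀ r) μ ∧
      ∫ x in ball x₀ r, ∫ y in ball x₀ (2 * r), (3 * r / ‖x - y‖) ^ s * g y ∂μ ∂μ ≤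
        3 ^ Module.finrank ℝ E * (⨍ z in ball (0 : E) 1, ‖z‖ ^ (-s) ∂μ) *
          μ.real (ball x₀ r) * ∫ y in ball x₀ (2 * r), g y ∂μ := by
  have hκ : 0 ≤ ⨍ z in ball (0 : E) 1, ‖z‖ ^ (-s) ∂μ := integral_nonneg fun z => by positivity
  exact integrable_integral_mul_and_integral_integral_mul_le
    (μ := μ.restrict (ball x₀ r)) (ν := μ.restrict (ball x₀ (2 * r)))
    (k := fun x y => (3 * r / ‖x - y‖) ^ s)
    ((measurable_const.div (measurable_fst.sub measurable_snd).norm).pow_const s)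
    (fun x y => by positivity) hg.measurable
    ((hg.continuousOn.integrableOn_compact (isCompact_closedBall x₀ (2 * r))).mono_set
      ball_subset_closedBall) hg₀ (by positivity)
    ((ae_restrict_iff' measurableSet_ball).2
      (ae_of_all _ fun y hy => lintegral_ball_div_norm_sub_rpow_le hs hy))

lemma exp_setIntegral_log_div_norm_sub_mul_le {s A R : ℝ} (hs : s < Module.finrank ℝ E)
    (hA : 0 < A) (hR : 0 < R) {g : E → ℝ} (hg : Continuous g) (hg₀ : ∀ y, 0 ≤ g y) {c : E}
    {ρ : ℝ} (hgA : ∫ y in ball c ρ, g y ∂μ ≤ A) (x : E) :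
    exp (s / A * ∫ y in ball c ρ, log (R / ‖x - y‖) * g y ∂μ) ≤
      2 + A⁻¹ * ∫ y in ball c ρ, (R / ‖x - y‖) ^ s * g y ∂μ := by
  have hgi : IntegrableOn g (ball c ρ) μ :=
    (hg.continuousOn.integrableOn_compact (isCompact_closedBall c ρ)).mono_set
      ball_subset_closedBall
  have hlogi := LocallyIntegrable.integrableOn_ball_mul
    (locallyIntegrable_log_div_norm_sub (μ := μ) hR x) hg c ρ
  have hki := LocallyIntegrable.integrableOn_ball_mul
    (locallyIntegrable_div_norm_sub_rpow (μ := μ) hR.le hs x) hg c ρ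
  have hexp : ∀ y, exp (s * log (R / ‖x - y‖)) * g y ≤ (1 + (R / ‖x - y‖) ^ s) * g y := fun y =>
    mul_le_mul_of_nonneg_right (exp_mul_log_le_one_add_rpow (by positivity) s) (hg₀ y)
  have hdom : IntegrableOn (fun y => (1 + (R / ‖x - y‖) ^ s) * g y) (ball c ρ) μ :=
    (hgi.add hki).congr (ae_of_all _ fun y => by simp only [Pi.add_apply]; ring)
  have hexpi : IntegrableOn (fun y => exp (s * log (R / ‖x - y‖)) * g y) (ball c ρ) μ :=
    hdom.mono' (((measurable_const.div (measurable_const.sub measurable_id).norm).log.const_mul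
      s).exp.mul hg.measurable).aestronglyMeasurable
      (ae_of_all _ fun y => (Real.norm_of_nonneg (by have := hg₀ y; positivity)).trans_le (hexp y))
  have hjensen := exp_inv_mul_integral_mul_le hA (ae_of_all _ hg₀) hgA hgi
    (by simpa only [mul_assoc] using hlogi.const_mul s) hexpi
  simp only [mul_assoc, integral_const_mul] at hjensen
  have hint : ∫ y in ball c ρ, exp (s * log (R / ‖x - y‖)) * g y ∂μ ≤
      A + ∫ y in ball c ρ, (R / ‖x - y‖) ^ s * g y ∂μ :=
    calc _ ≤ ∫ y in ball c ρ, (1 + (R / ‖x - y‖) ^ s) * g y ∂μ :=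
          integral_mono_of_nonneg (ae_of_all _ fun y => by have := hg₀ y; positivity) hdom
            (ae_of_all _ hexp)
      _ = ∫ y in ball c ρ, g y ∂μ + ∫ y in ball c ρ, (R / ‖x - y‖) ^ s * g y ∂μ := by
          rw [← integral_add hgi hki]
          exact integral_congr_ae (ae_of_all _ fun y => by ring)
      _ ≤ _ := by linarith
  calc exp (s / A * ∫ y in ball c ρ, log (R / ‖x - y‖) * g y ∂μ)
      = exp (A⁻¹ * (s * ∫ y in ball c ρ, log (R / ‖x - y‖) * g y ∂μ)) := by
        rw [div_eq_inv_mul, mul_assoc]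
    _ ≤ 1 + A⁻¹ * (A + ∫ y in ball c ρ, (R / ‖x - y‖) ^ s * g y ∂μ) :=
        hjensen.trans (by gcongr)
    _ = _ := by rw [mul_add, inv_mul_cancel₀ hA.ne']; ring

end Kernel

section Decomposition

variable {E : Type*} [NormedAddCommGroup E] [MeasurableSpace E] {μ : Measure E}

lemma log_div_norm_sub_mul_sub_ae_eq [NullSingletonClass μ] (f : E → ℝ) (a x x₀ : E) :
    (fun y => log (‖a - y‖ / ‖x - y‖) * f y - log (‖a - y‖ / ‖x₀ - y‖) * f y) =ᵐ[μ]
      fun y => log (‖x₀ - y‖ / ‖x - y‖) * f y := by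
  filter_upwards [Measure.ae_ne μ a, Measure.ae_ne μ x, Measure.ae_ne μ x₀] with y hya hyx hyx₀
  rw [← sub_mul, log_div_sub_log_div (norm_ne_zero_iff.2 (sub_ne_zero.2 hya.symm))
    (norm_ne_zero_iff.2 (sub_ne_zero.2 hyx.symm)) (norm_ne_zero_iff.2 (sub_ne_zero.2 hyx₀.symm))]

lemma setIntegral_compl_ball_log_norm_sub_div_mul_le [OpensMeasurableSpace E] {f : E → ℝ}
    (hf : Integrable f μ) {x x₀ : E} {r : ℝ} (hx : x ∈ ball x₀ r) :
    ∫ y in (ball x₀ (2 * r))ᶜ, log (‖x₀ - y‖ / ‖x - y‖) * f y ∂μ ≤ log 2 * ∫ y, |f y| ∂μ := by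
  have hpt : ∀ y ∈ (ball x₀ (2 * r))ᶜ, ‖log (‖x₀ - y‖ / ‖x - y‖) * f y‖ ≤ log 2 * |f y| := by
    intro y hy
    rw [mem_ball, dist_eq_norm] at hx
    rw [mem_compl_iff, mem_ball, not_lt, dist_eq_norm] at hy
    rw [norm_mul, Real.norm_eq_abs, Real.norm_eq_abs]
    exact mul_le_mul_of_nonneg_right (abs_log_norm_sub_div_le_log_two hx hy) (abs_nonneg _)
  calc _ ≤ ‖∫ y in (ball x₀ (2 * r))ᶜ, log (‖x₀ - y‖ / ‖x - y‖) * f y ∂μ‖ := le_abs_self _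
    _ ≤ ∫ y in (ball x₀ (2 * r))ᶜ, log 2 * |f y| ∂μ :=
        norm_integral_le_of_norm_le (hf.abs.const_mul _).integrableOn
          ((ae_restrict_iff' measurableSet_ball.compl).2 (ae_of_all _ hpt))
    _ ≤ log 2 * ∫ y, |f y| ∂μ := by
        rw [integral_const_mul]
        exact mul_le_mul_of_nonneg_left
          (setIntegral_le_integral hf.abs (ae_of_all _ fun _ => abs_nonneg _))
          (log_nonneg one_le_two)

variable [NormedSpace ℝ E] [FiniteDimensional ℝ E] [BorelSpace E] [μ.IsAddHaarMeasure]
  [Nontrivial E]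

lemma setIntegral_ball_log_norm_sub_div_mul {f : E → ℝ} (hf : Continuous f) {R : ℝ} (hR : 0 < R)
    (x x₀ c : E) (ρ : ℝ) :
    ∫ y in ball c ρ, log (‖x₀ - y‖ / ‖x - y‖) * f y ∂μ =
      ∫ y in ball c ρ, log (R / ‖x - y‖) * f y ∂μ -
        ∫ y in ball c ρ, log (R / ‖x₀ - y‖) * f y ∂μ := by
  have hint : ∀ z, IntegrableOn (fun y => log (R / ‖z - y‖) * f y) (ball c ρ) μ := fun z =>
    LocallyIntegrable.integrableOn_ball_mul (locallyIntegrable_log_div_norm_sub hR z) hf c ρ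
  rw [← integral_sub (hint x) (hint x₀)]
  refine integral_congr_ae (ae_restrict_of_ae ?_)
  filter_upwards [Measure.ae_ne μ x, Measure.ae_ne μ x₀] with y hyx hyx₀
  rw [← sub_mul, log_div_sub_log_div hR.ne' (norm_ne_zero_iff.2 (sub_ne_zero.2 hyx.symm))
    (norm_ne_zero_iff.2 (sub_ne_zero.2 hyx₀.symm))]

lemma setIntegral_log_div_norm_sub_mul_le_max {f : E → ℝ} (hf : Continuous f) {x x₀ : E} {r : ℝ}
    (hx : x ∈ ball x₀ r) :
    ∫ y in ball x₀ (2 * r), log (3 * r / ‖x - y‖) * f y ∂μ ≤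
      ∫ y in ball x₀ (2 * r), log (3 * r / ‖x - y‖) * max (f y) 0 ∂μ := by
  have hr := pos_of_mem_ball hx
  have hk := locallyIntegrable_log_div_norm_sub (μ := μ) (R := 3 * r) (by positivity) x
  refine setIntegral_mono_on (LocallyIntegrable.integrableOn_ball_mul hk hf _ _)
    (LocallyIntegrable.integrableOn_ball_mul hk (hf.max continuous_const) _ _) measurableSet_ball
    fun y hy => mul_le_mul_of_nonneg_left (le_max_left _ _) (log_div_nonneg (norm_nonneg _) ?_)
  rw [mem_ball] at hx hy
  rw [← dist_eq_norm]
  linarith [dist_triangle_right x y x₀]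

end Decomposition

section LogPotential

variable {n : ℕ}

lemma cN_pos [NeZero n] : 0 < cN n := by
  have : (0 : ℝ) < n / 2 := by have := NeZero.pos n; positivity
  unfold cN
  have := Real.Gamma_pos_of_pos this
  positivity

lemma logPot_const_mul (a : ℝ) (f : EuclideanSpace ℝ (Fin n) → ℝ) (x : EuclideanSpace ℝ (Fin n)) :
    logPot n (fun y => a * f y) x = a * logPot n f x := by
  simp only [logPot, mul_left_comm _ a, integral_const_mul]

/-- `n u(x₀)` with the kernel `log (|y| / |x₀ - y|)` replaced by `log (|y| / 3r)` on `B(x₀, 2r)`: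
the mean of `e^{n u}` over `B(x₀, r)` is controlled by its exponential. -/
noncomputable def localExponent (n : ℕ) (f : EuclideanSpace ℝ (Fin n) → ℝ)
    (x₀ : EuclideanSpace ℝ (Fin n)) (r : ℝ) : ℝ :=
  n * logPot n f x₀ - n / cN n * ∫ y in ball x₀ (2 * r), log (3 * r / ‖x₀ - y‖) * f y

lemma localExponent_const_mul (a : ℝ) (f : EuclideanSpace ℝ (Fin n) → ℝ)
    (x₀ : EuclideanSpace ℝ (Fin n)) (r : ℝ) :
    localExponent n (fun y => a * f y) x₀ r = a * localExponent n f x₀ r := by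
  simp only [localExponent, logPot_const_mul, mul_left_comm _ a, integral_const_mul]
  ring

variable [NeZero n] {f : EuclideanSpace ℝ (Fin n) → ℝ}

lemma mul_logPot_le (hfc : Continuous f) (hfi : Integrable f)
    (hlog : ∀ x : EuclideanSpace ℝ (Fin n), Integrable fun y => log (‖y‖ / ‖x - y‖) * f y)
    {x x₀ : EuclideanSpace ℝ (Fin n)} {r : ℝ} (hx : x ∈ ball x₀ r) :
    n * logPot n f x ≤ localExponent n f x₀ r + n / cN n * (log 2 * ∫ y, |f y|) +
      n / cN n * ∫ y in ball x₀ (2 * r), log (3 * r / ‖x - y‖) * max (f y) 0 := by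
  have hr := pos_of_mem_ball hx
  have hae := log_div_norm_sub_mul_sub_ae_eq (μ := volume) f 0 x x₀
  simp only [zero_sub, norm_neg] at hae
  have hdiff : logPot n f x - logPot n f x₀ =
      (cN n)⁻¹ * ∫ y, log (‖x₀ - y‖ / ‖x - y‖) * f y := by
    rw [logPot, logPot, ← integral_congr_ae hae, integral_sub (hlog x) (hlog x₀)]
    ring
  rw [← integral_add_compl measurableSet_ball (((hlog x).sub (hlog x₀)).congr hae)
    (s := ball x₀ (2 * r)), setIntegral_ball_log_norm_sub_div_mul hfc (R := 3 * r) (by positivity)]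
    at hdiff
  have hnear := setIntegral_log_div_norm_sub_mul_le_max (μ := volume) hfc hx
  have hfar := setIntegral_compl_ball_log_norm_sub_div_mul_le hfi hx
  have hnc : 0 ≤ (n : ℝ) * (cN n)⁻¹ := by have := cN_pos (n := n); positivity
  rw [sub_eq_iff_eq_add'] at hdiff
  rw [localExponent, hdiff, div_eq_mul_inv]
  nlinarith [mul_le_mul_of_nonneg_left hnear hnc, mul_le_mul_of_nonneg_left hfar hnc]

lemma exp_mul_logPot_le (hfc : Continuous f) (hfi : Integrable f)
    (hlog : ∀ x : EuclideanSpace ℝ (Fin n), Integrable fun y => log (‖y‖ / ‖x - y‖) * f y)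
    {A : ℝ} (hA : 0 < A) (hAc : A < cN n) (hfA : ∫ y, max (f y) 0 ≤ A)
    {x x₀ : EuclideanSpace ℝ (Fin n)} {r : ℝ} (hx : x ∈ ball x₀ r) :
    exp (n * logPot n f x) ≤
      exp (localExponent n f x₀ r + n / cN n * (log 2 * ∫ y, |f y|)) *
        (2 + A⁻¹ * ∫ y in ball x₀ (2 * r), (3 * r / ‖x - y‖) ^ (n * A / cN n) * max (f y) 0) := by
  have hr := pos_of_mem_ball hx
  have hs : n * A / cN n < Module.finrank ℝ (EuclideanSpace ℝ (Fin n)) := by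
    rw [finrank_euclideanSpace_fin, div_lt_iff₀ cN_pos]
    exact mul_lt_mul_of_pos_left hAc (Nat.cast_pos.2 (NeZero.pos n))
  have hjensen := exp_setIntegral_log_div_norm_sub_mul_le (μ := volume) hs hA
    (R := 3 * r) (c := x₀) (ρ := 2 * r) (by positivity) (hfc.max continuous_const)
    (fun y => le_max_right _ _)
    ((setIntegral_le_integral hfi.pos_part (ae_of_all _ fun _ => le_max_right _ _)).trans hfA) x
  rw [show (n : ℝ) * A / cN n / A = n / cN n by field_simp] at hjensen
  calc exp (n * logPot n f x)
      ≤ exp (localExponent n f x₀ r + n / cN n * (log 2 * ∫ y, |f y|) +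
          n / cN n * ∫ y in ball x₀ (2 * r), log (3 * r / ‖x - y‖) * max (f y) 0) :=
        exp_le_exp.2 (mul_logPot_le hfc hfi hlog hx)
    _ ≤ _ := by
        rw [exp_add]
        exact mul_le_mul_of_nonneg_left hjensen (exp_pos _).le

lemma setIntegral_exp_mul_logPot_le (hfc : Continuous f) (hfi : Integrable f)
    (hlog : ∀ x : EuclideanSpace ℝ (Fin n), Integrable fun y => log (‖y‖ / ‖x - y‖) * f y)
    {A : ℝ} (hA : 0 < A) (hAc : A < cN n) (hfA : ∫ y, max (f y) 0 ≤ A)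
    (x₀ : EuclideanSpace ℝ (Fin n)) {r : ℝ} (hr : 0 < r) :
    ∫ x in ball x₀ r, exp (n * logPot n f x) ≤
      exp (localExponent n f x₀ r + n / cN n * (log 2 * ∫ y, |f y|)) *
        (2 + 3 ^ n * ⨍ z in ball (0 : EuclideanSpace ℝ (Fin n)) 1, ‖z‖ ^ (-(n * A / cN n))) *
        volume.real (ball x₀ r) := by
  set s := n * A / cN n
  have hs : s < Module.finrank ℝ (EuclideanSpace ℝ (Fin n)) := by
    rw [finrank_euclideanSpace_fin, div_lt_iff₀ cN_pos]
    exact mul_lt_mul_of_pos_left hAc (Nat.cast_pos.2 (NeZero.pos n))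
  obtain ⟨hΦi, hΦ⟩ := integrableOn_and_integral_ball_div_norm_sub_rpow_mul_le (μ := volume) hs
    (hfc.max continuous_const) (fun y => le_max_right (f y) 0) x₀ hr
  rw [finrank_euclideanSpace_fin] at hΦ
  set Φ := fun x => ∫ y in ball x₀ (2 * r), (3 * r / ‖x - y‖) ^ s * max (f y) 0
  set C := 3 ^ n * (⨍ z in ball (0 : EuclideanSpace ℝ (Fin n)) 1, ‖z‖ ^ (-s)) *
    volume.real (ball x₀ r)
  set E₀ := exp (localExponent n f x₀ r + n / cN n * (log 2 * ∫ y, |f y|))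
  have hC : 0 ≤ C := mul_nonneg (mul_nonneg (by positivity)
    (integral_nonneg fun z => by positivity)) measureReal_nonneg
  have hΦA : A⁻¹ * ∫ x in ball x₀ r, Φ x ≤ C :=
    calc _ ≤ A⁻¹ * (C * A) := mul_le_mul_of_nonneg_left (hΦ.trans (mul_le_mul_of_nonneg_left
          ((setIntegral_le_integral hfi.pos_part (ae_of_all _ fun _ => le_max_right _ _)).trans
            hfA) hC)) (inv_nonneg.2 hA.le)
      _ = C := by field_simp
  have h2 : IntegrableOn (fun _ => (2 : ℝ)) (ball x₀ r) := integrableOn_const measure_ball_lt_top.ne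
  calc ∫ x in ball x₀ r, exp (n * logPot n f x)
      ≤ ∫ x in ball x₀ r, E₀ * (2 + A⁻¹ * Φ x) :=
        integral_mono_of_nonneg (ae_of_all _ fun _ => (exp_pos _).le)
          ((h2.add (hΦi.const_mul A⁻¹)).const_mul E₀)
          ((ae_restrict_iff' measurableSet_ball).2 (ae_of_all _ fun x hx =>
            exp_mul_logPot_le hfc hfi hlog hA hAc hfA hx))
    _ = E₀ * (2 * volume.real (ball x₀ r) + A⁻¹ * ∫ x in ball x₀ r, Φ x) := by
        rw [integral_const_mul, integral_add h2 (hΦi.const_mul A⁻¹), integral_const_mul,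
          setIntegral_const, smul_eq_mul]
        ring
    _ ≤ E₀ * (2 * volume.real (ball x₀ r) + C) := by gcongr
    _ = _ := by ring

theorem exists_average_exp_logPot_le {a : ℝ} (ha : a < cN n) (b : ℝ) :
    ∃ K : ℝ, ∀ f : EuclideanSpace ℝ (Fin n) → ℝ, Continuous f → Integrable f →
      (∀ x : EuclideanSpace ℝ (Fin n), Integrable fun y => log (‖y‖ / ‖x - y‖) * f y) →
      ∫ y, max (f y) 0 ≤ a → ∫ y, max (-f y) 0 ≤ b →
      ∀ (x₀ : EuclideanSpace ℝ (Fin n)) (r : ℝ), 0 < r →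
        (volume (ball x₀ r)).toReal⁻¹ * ∫ x in ball x₀ r, exp (n * logPot n f x) ≤
          K * exp (localExponent n f x₀ r) := by
  -- the Jensen weight `f⁺ / A` needs `0 < A`, and `∫ f⁺` may vanish
  set A := (max a 0 + cN n) / 2 with hAdef
  have hA : 0 < A := by have := cN_pos (n := n); positivity
  have hAc : A < cN n := by linarith [max_lt ha cN_pos]
  set κ := ⨍ z in ball (0 : EuclideanSpace ℝ (Fin n)) 1, ‖z‖ ^ (-(n * A / cN n))
  refine ⟨exp (n / cN n * (log 2 * (A + b))) * (2 + 3 ^ n * κ),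
    fun f hfc hfi hlog hfa hfb x₀ r hr => ?_⟩
  have hfA : ∫ y, max (f y) 0 ≤ A := hfa.trans (by linarith [le_max_left a 0])
  have habs : ∫ y, |f y| ≤ A + b := by
    simp_rw [← max_zero_add_max_neg_zero_eq_abs_self]
    rw [integral_add hfi.pos_part (hfi.neg.pos_part : Integrable fun y => max (-f y) 0)]
    linarith
  have hexp : exp (localExponent n f x₀ r + n / cN n * (log 2 * ∫ y, |f y|)) ≤
      exp (n / cN n * (log 2 * (A + b))) * exp (localExponent n f x₀ r) := by
    have hnc : 0 ≤ n / cN n := div_nonneg (Nat.cast_nonneg n) cN_pos.le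
    rw [← exp_add, add_comm]
    gcongr
  have hκ : 0 ≤ κ := integral_nonneg fun z => by positivity
  rw [inv_mul_le_iff₀ (ENNReal.toReal_pos (measure_ball_pos _ _ hr).ne' measure_ball_lt_top.ne)]
  calc ∫ x in ball x₀ r, exp (n * logPot n f x)
      ≤ exp (localExponent n f x₀ r + n / cN n * (log 2 * ∫ y, |f y|)) * (2 + 3 ^ n * κ) *
          volume.real (ball x₀ r) := setIntegral_exp_mul_logPot_le hfc hfi hlog hA hAc hfA x₀ hr
    _ ≤ exp (n / cN n * (log 2 * (A + b))) * exp (localExponent n f x₀ r) * (2 + 3 ^ n * κ) *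
          volume.real (ball x₀ r) := by gcongr
    _ = _ := by rw [measureReal_def]; ring

end LogPotential

/-- Proposition 5.2. If `u = logPot f` with `α = ∫ f⁺ < c_n`
and `β = ∫ f⁻ < ∞`, then `e^{n u}` is an `A_p` weight for some `p > 1` with
constant `K`, both depending only on `n`, `α`, `β`. -/
theorem expLogPot_isAp
    (n : ℕ) (hn : 2 ≤ n) (α β : ℝ) (hα : α < cN n) :
    ∃ p K : ℝ, 1 < p ∧
      ∀ f : EuclideanSpace ℝ (Fin n) → ℝ,
        Continuous f →
        Integrable f →
        (∀ x : EuclideanSpace ℝ (Fin n),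
          Integrable (fun y => Real.log (‖y‖ / ‖x - y‖) * f y)) →
        (∫ y, max (f y) 0) = α →
        (∫ y, max (-f y) 0) = β →
        IsApWeight n p K (fun x => Real.exp ((n : ℝ) * logPot n f x)) := by
  have : NeZero n := ⟨by omega⟩
  set D := 1 + max β 0 / cN n with hDdef
  have hD : 0 < D := by have := cN_pos (n := n); positivity
  have hβD : β / D < cN n := by
    rw [div_lt_iff₀ hD, hDdef, mul_add, mul_one, mul_div_cancel₀ _ cN_pos.ne']
    linarith [le_max_left β 0, cN_pos (n := n)]
  obtain ⟨K₁, hK₁⟩ := exists_average_exp_logPot_le hα β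
  obtain ⟨K₂, hK₂⟩ := exists_average_exp_logPot_le hβD (α / D)
  refine ⟨1 + D, K₁ * K₂ ^ D, by linarith, fun f hfc hfi hlog hfα hfβ x₀ r hr => ?_⟩
  -- `e^{-n u / D}` is `e^{n v}` for the potential `v` of `-f / D`
  have h₂ := hK₂ (fun y => -D⁻¹ * f y) (continuous_const.mul hfc) (hfi.const_mul _)
    (fun x => ((hlog x).const_mul (-D⁻¹)).congr (ae_of_all _ fun y => by ring))
    (le_of_eq (by
      rw [← hfβ, ← inv_mul_eq_div, ← integral_max_const_mul_zero (inv_nonneg.2 hD.le)]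
      simp only [neg_mul_comm]))
    (le_of_eq (by
      rw [← hfα, ← inv_mul_eq_div, ← integral_max_const_mul_zero (inv_nonneg.2 hD.le)]
      simp only [neg_mul, neg_neg])) x₀ r hr
  simp only [localExponent_const_mul, logPot_const_mul] at h₂
  have hpow : ∀ y, exp (n * logPot n f y) ^ (-(1 / (1 + D - 1))) =
      exp (n * (-D⁻¹ * logPot n f y)) := fun y => by rw [← exp_mul]; ring_nf
  simp_rw [hpow, add_sub_cancel_left]
  exact mul_rpow_le_of_le_mul_exp (by positivity) (by positivity) hD
    (hK₁ f hfc hfi hlog hfα.le hfβ.le x₀ r hr) h₂
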